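/- arXiv:1504.03238 — 4 statements merged into one kernel-verified Lean document; each statement's English description precedes it below -/
import Mathlib

section
/- Let n ≥ 2. Suppose H(x,z) = Σ_{k=0}^n g_k(x) z^k with g_k : ℝ≥0 → ℝ differentiable and linearly independent, and suppose there exist functions b, a, R on a non-trivial interval I such that ∂ₓH = b ∂_z H + (1/2) a ∂_{zz} H - R H on ℝ≥0 × I. Then R is a polynomial of degree at most 2, b is a polynomial of degree at most 3, and a is a polynomial of degree at most 4. -/
/-!
Evaluating the equation at `n + 1` distinct points of `I` (a Vandermonde system) puts every `g'ₖ`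
in the span of the `gⱼ`, and comparing coefficients of the independent `gⱼ` shows that
`L = b ∂_z + ½ a ∂_z² - R` maps each monomial `zʲ`, `j ≤ n`, to a polynomial of degree `≤ n`
on `I`. The images of `1, z, z²` show that `R`, `b`, `a` are polynomials, so `L` acts on `ℝ[X]`,
where `L(X²f) - 2X L(Xf) + X² Lf = a f` and `L(Xf) - X Lf = b f + a f'`. Taking `f = X^(n-2)`
gives `deg a ≤ 4`, then `deg b ≤ 3`, and `L(Xⁿ)` itself gives `deg R ≤ 2`.
-/

open Polynomial

theorem Set.OrdConnected.infinite_of_nontrivial {I : Set ℝ} (hI : I.OrdConnected)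
    (hnt : I.Nontrivial) : I.Infinite := by
  obtain ⟨x, hx, y, hy, hxy⟩ := hnt
  rcases hxy.lt_or_gt with h | h
  · exact (Set.Icc_infinite h).mono (hI.out hx hy)
  · exact (Set.Icc_infinite h).mono (hI.out hy hx)

theorem Submodule.mem_of_forall_sum_pow_smul_mem {K M : Type*} [Field K] [AddCommGroup M]
    [Module K M] (N : Submodule K M) {I : Set K} (hI : I.Infinite) {m : ℕ} (v : Fin m → M)
    (h : ∀ z ∈ I, ∑ k : Fin m, z ^ (k : ℕ) • v k ∈ N) (k : Fin m) : v k ∈ N := by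
  classical
  let z : Fin m → K := fun i => hI.natEmbedding I i
  have hz : Function.Injective z := fun i j hij =>
    Fin.val_injective (hI.natEmbedding I |>.injective (Subtype.ext hij))
  have hV : IsUnit (Matrix.vandermonde z) :=
    (Matrix.isUnit_iff_isUnit_det _).mpr (Matrix.det_vandermonde_ne_zero_iff.mpr hz).isUnit
  obtain ⟨w, hw⟩ := Matrix.vecMul_surjective_iff_isUnit.mpr hV (Pi.single k 1)
  have hrow (i : Fin m) : Fintype.linearCombination K v (Matrix.vandermonde z i) ∈ N := by
    simpa [Fintype.linearCombination_apply, Matrix.vandermonde_apply] using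
      h (z i) (hI.natEmbedding I i).2
  have hvk : v k = Fintype.linearCombination K v (Matrix.vecMul w (Matrix.vandermonde z)) := by
    simp [hw]
  rw [hvk, Matrix.vecMul_eq_sum, map_sum]
  exact N.sum_mem fun i _ => by rw [map_smul]; exact N.smul_mem _ (hrow i)

theorem LinearIndependent.exists_polynomial_eval_eq {K M ι : Type*} [Field K] [AddCommGroup M]
    [Module K M] [Fintype ι] {G : ι → M} (hG : LinearIndependent K G) {I : Set K}
    (hI : I.Infinite) {n : ℕ} (G' : Fin (n + 1) → M) (c : ι → K → K)
    (h : ∀ z ∈ I, ∑ k : Fin (n + 1), z ^ (k : ℕ) • G' k = ∑ j, c j z • G j) :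
    ∃ P : ι → K[X], (∀ j, (P j).natDegree ≤ n) ∧ ∀ j, ∀ z ∈ I, c j z = (P j).eval z := by
  have hspan (k : Fin (n + 1)) : G' k ∈ Submodule.span K (Set.range G) := by
    refine Submodule.mem_of_forall_sum_pow_smul_mem _ hI G' (fun z hz => ?_) k
    rw [h z hz]
    exact Submodule.sum_mem _ fun j _ => Submodule.smul_mem _ _ (Submodule.subset_span ⟨j, rfl⟩)
  choose A hA using fun k => (Submodule.mem_span_range_iff_exists_fun K).mp (hspan k)
  refine ⟨fun j => ∑ k : Fin (n + 1), C (A k j) * X ^ (k : ℕ), fun j => ?_, fun j z hz => ?_⟩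
  · exact natDegree_sum_le_of_forall_le _ _ fun k _ =>
      (natDegree_C_mul_X_pow_le _ _).trans (Nat.lt_succ_iff.mp k.2)
  · simp only [eval_finsetSum, eval_C, eval_mul, eval_pow, eval_X]
    refine (Fintype.linearIndependent_iffₛ.mp hG (fun j => ∑ k, A k j * z ^ (k : ℕ)) (c · z) ?_
      j).symm
    simp only [Finset.sum_smul, ← h z hz, ← hA, Finset.smul_sum, smul_smul]
    rw [Finset.sum_comm]
    simp only [mul_comm]

theorem natDegree_le_of_natDegree_X_pow_mul_le {S : Type*} [Semiring S] [Nontrivial S]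
    {u : S[X]} {m d : ℕ} (h : (X ^ m * u).natDegree ≤ m + d) : u.natDegree ≤ d := by
  rcases eq_or_ne u 0 with rfl | hu
  · simp
  · rw [natDegree_X_pow_mul m hu] at h
    omega

noncomputable def generator (b a R f : ℝ[X]) : ℝ[X] :=
  b * derivative f + C (1 / 2) * a * derivative (derivative f) - R * f

noncomputable def generatorMonomial (b a R : ℝ → ℝ) (j : ℕ) (z : ℝ) : ℝ :=
  b z * (j * z ^ (j - 1)) + 1 / 2 * a z * (j * (j - 1) * z ^ (j - 2)) - R z * z ^ j

theorem exists_polynomials_of_generatorMonomial_eq {b a R : ℝ → ℝ} {I : Set ℝ}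
    {P₀ P₁ P₂ : ℝ[X]} (h₀ : ∀ z ∈ I, generatorMonomial b a R 0 z = P₀.eval z)
    (h₁ : ∀ z ∈ I, generatorMonomial b a R 1 z = P₁.eval z)
    (h₂ : ∀ z ∈ I, generatorMonomial b a R 2 z = P₂.eval z) :
    ∃ bp ap Rp : ℝ[X], ∀ z ∈ I, b z = bp.eval z ∧ a z = ap.eval z ∧ R z = Rp.eval z := by
  refine ⟨P₁ - X * P₀, P₂ - 2 * X * P₁ + X ^ 2 * P₀, -P₀, fun z hz => ?_⟩
  have e₀ := h₀ z hz
  have e₁ := h₁ z hz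
  have e₂ := h₂ z hz
  norm_num [generatorMonomial] at e₀ e₁ e₂
  simp only [eval_sub, eval_add, eval_mul, eval_neg, eval_pow, eval_X, eval_ofNat]
  refine ⟨?_, ?_, ?_⟩
  · linear_combination e₁ - z * e₀
  · linear_combination e₂ - 2 * z * e₁ + z ^ 2 * e₀
  · linear_combination -e₀

section generator

variable (b a R : ℝ[X])

theorem eval_generator_X_pow (j : ℕ) (z : ℝ) :
    (generator b a R (X ^ j)).eval z = generatorMonomial (b.eval ·) (a.eval ·) (R.eval ·) j z := by
  have h2 := iterate_derivative_X_pow_eq_C_mul (R := ℝ) j 2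
  simp only [Function.iterate_succ_apply', Function.iterate_zero_apply] at h2
  rw [generator, h2, derivative_X_pow, Nat.cast_descFactorial_two]
  simp only [generatorMonomial, eval_sub, eval_add, eval_mul, eval_C, eval_pow, eval_X]

theorem generator_X_mul_sub (f : ℝ[X]) :
    generator b a R (X * f) - X * generator b a R f = b * f + a * derivative f := by
  simp only [generator, derivative_mul, derivative_add, derivative_X, derivative_one]
  have : C (1 / 2 : ℝ) * 2 = 1 := by rw [← C_ofNat, ← C_mul]; norm_num
  linear_combination (a * derivative f) * this

theorem generator_X_sq_mul_sub (f : ℝ[X]) :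
    generator b a R (X ^ 2 * f) - 2 * X * generator b a R (X * f) + X ^ 2 * generator b a R f =
      a * f := by
  simp only [generator, derivative_mul, derivative_X_pow_succ, Nat.cast_one, map_add, map_one,
    pow_one, derivative_one, add_zero, zero_mul, derivative_X, mul_one, zero_add, one_mul]
  have : C (1 / 2 : ℝ) * 2 = 1 := by rw [← C_ofNat, ← C_mul]; norm_num
  linear_combination (a * f) * this

theorem natDegree_le_of_natDegree_generator_X_pow_le (k : ℕ)
    (h : ∀ j ≤ 2, (generator b a R (X ^ (k + j))).natDegree ≤ k + 2) :
    a.natDegree ≤ 4 ∧ b.natDegree ≤ 3 ∧ R.natDegree ≤ 2 := by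
  have h₀ : (generator b a R (X ^ k)).natDegree ≤ k + 2 := h 0 (by norm_num)
  have h₁ := h 1 (by norm_num)
  have h₂ := h 2 (by norm_num)
  have ha : a.natDegree ≤ 4 := by
    refine natDegree_le_of_natDegree_X_pow_mul_le (m := k) ?_
    have key := generator_X_sq_mul_sub b a R (X ^ k)
    rw [← pow_add, ← pow_succ', add_comm 2, mul_comm a] at key
    rw [← key]
    compute_degree
    omega
  have hb : b.natDegree ≤ 3 := by
    refine natDegree_le_of_natDegree_X_pow_mul_le (m := k + 1) ?_
    have key := generator_X_mul_sub b a R (X ^ (k + 1))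
    rw [← pow_succ', add_assoc] at key
    rw [mul_comm, ← sub_eq_iff_eq_add.mpr key, derivative_X_pow]
    compute_degree
    omega
  refine ⟨ha, hb, natDegree_le_of_natDegree_X_pow_mul_le (m := k + 2) ?_⟩
  have key : X ^ (k + 2) * R = b * derivative (X ^ (k + 2)) +
      C (1 / 2) * a * derivative (derivative (X ^ (k + 2))) - generator b a R (X ^ (k + 2)) := by
    rw [generator]; ring
  rw [key]
  simp only [derivative_X_pow, derivative_C_mul]
  compute_degree
  omega

end generator

theorem polynomial_model_degree_classification_general
    (n : ℕ) (hn : 2 ≤ n)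
    (I : Set ℝ) (hI : I.OrdConnected) (hnt : ∃ x ∈ I, ∃ y ∈ I, x ≠ y)
    (g g' : Fin (n + 1) → ℝ → ℝ)
    (hli : LinearIndependent ℝ fun k => (Set.Ici (0 : ℝ)).restrict (g k))
    (b a R : ℝ → ℝ)
    (hPDE : ∀ x : ℝ, 0 ≤ x → ∀ z ∈ I,
      ∑ k : Fin (n + 1), g' k x * z ^ (k : ℕ) =
        b z * (∑ k : Fin (n + 1), g k x * (k : ℕ) * z ^ ((k : ℕ) - 1)) +
          (1 / 2) * a z *
            (∑ k : Fin (n + 1), g k x * (k : ℕ) * ((k : ℕ) - 1 : ℝ) * z ^ ((k : ℕ) - 2)) -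
          R z * ∑ k : Fin (n + 1), g k x * z ^ (k : ℕ)) :
    (∃ p : Polynomial ℝ, p.degree ≤ 2 ∧ ∀ z ∈ I, R z = p.eval z) ∧
    (∃ q : Polynomial ℝ, q.degree ≤ 3 ∧ ∀ z ∈ I, b z = q.eval z) ∧
    (∃ r : Polynomial ℝ, r.degree ≤ 4 ∧ ∀ z ∈ I, a z = r.eval z) := by
  have hIinf := hI.infinite_of_nontrivial hnt
  have hcomb (z : ℝ) (hz : z ∈ I) :
      ∑ k : Fin (n + 1), z ^ (k : ℕ) • (Set.Ici (0 : ℝ)).domRestrict (g' k) =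
        ∑ j : Fin (n + 1), generatorMonomial b a R j z • (Set.Ici (0 : ℝ)).domRestrict (g j) := by
    funext x
    simp only [Finset.sum_apply, Pi.smul_apply, smul_eq_mul, generatorMonomial]
    calc ∑ k : Fin (n + 1), z ^ (k : ℕ) * g' k x
        = ∑ k : Fin (n + 1), g' k x * z ^ (k : ℕ) := by simp only [mul_comm]
      _ = _ := hPDE x x.2 z hz
      _ = _ := by
        simp only [Finset.mul_sum, ← Finset.sum_add_distrib, ← Finset.sum_sub_distrib]
        exact Finset.sum_congr rfl fun j _ => show _ = _ * g j x by ring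
  obtain ⟨P, hPdeg, hP⟩ := hli.exists_polynomial_eval_eq hIinf _ _ hcomb
  obtain ⟨bp, ap, Rp, hfun⟩ := exists_polynomials_of_generatorMonomial_eq
    (hP ⟨0, by omega⟩) (hP ⟨1, by omega⟩) (hP ⟨2, by omega⟩)
  have hgen (j : Fin (n + 1)) : generator bp ap Rp (X ^ (j : ℕ)) = P j :=
    eq_of_infinite_eval_eq _ _ <| hIinf.mono fun z hz => by
      obtain ⟨hb, ha, hR⟩ := hfun z hz
      change eval z _ = eval z _
      rw [eval_generator_X_pow, ← hP j z hz]
      simp only [generatorMonomial, hb, ha, hR]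
  obtain ⟨k, rfl⟩ : ∃ k, n = k + 2 := ⟨n - 2, by omega⟩
  obtain ⟨ha, hb, hR⟩ := natDegree_le_of_natDegree_generator_X_pow_le bp ap Rp k
    fun j hj => hgen ⟨k + j, by omega⟩ ▸ hPdeg _
  exact ⟨⟨Rp, natDegree_le_iff_degree_le.mp hR, fun z hz => (hfun z hz).2.2⟩,
    ⟨bp, natDegree_le_iff_degree_le.mp hb, fun z hz => (hfun z hz).1⟩,
    ⟨ap, natDegree_le_iff_degree_le.mp ha, fun z hz => (hfun z hz).2.1⟩⟩

/-- Degree classification for scalar polynomial term structure models, `n ≥ 2`: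
if `H(x,z) = Σ g_k(x) z^k` satisfies `∂ₓH = b ∂_zH + (1/2) a ∂_{zz}H - R H` on
`ℝ₊ × I` with the `g_k` linearly independent, then `R`, `b`, `a` agree on `I`
with polynomials of degree at most `2`, `3`, `4` respectively. -/
theorem polynomial_model_degree_classification
    (n : ℕ) (hn : 2 ≤ n)
    (I : Set ℝ) (hI : I.OrdConnected) (hnt : ∃ x ∈ I, ∃ y ∈ I, x ≠ y)
    (g g' : Fin (n + 1) → ℝ → ℝ)
    (hderiv : ∀ k, ∀ x : ℝ, 0 ≤ x →
      HasDerivWithinAt (g k) (g' k x) (Set.Ici 0) x)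
    (hli : LinearIndependent ℝ fun k => (Set.Ici (0 : ℝ)).restrict (g k))
    (b a R : ℝ → ℝ)
    (hPDE : ∀ x : ℝ, 0 ≤ x → ∀ z ∈ I,
      ∑ k : Fin (n + 1), g' k x * z ^ (k : ℕ) =
        b z * (∑ k : Fin (n + 1), g k x * (k : ℕ) * z ^ ((k : ℕ) - 1)) +
          (1 / 2) * a z *
            (∑ k : Fin (n + 1), g k x * (k : ℕ) * ((k : ℕ) - 1 : ℝ) * z ^ ((k : ℕ) - 2)) -
          R z * ∑ k : Fin (n + 1), g k x * z ^ (k : ℕ)) :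
    (∃ p : Polynomial ℝ, p.degree ≤ 2 ∧ ∀ z ∈ I, R z = p.eval z) ∧
    (∃ q : Polynomial ℝ, q.degree ≤ 3 ∧ ∀ z ∈ I, b z = q.eval z) ∧
    (∃ r : Polynomial ℝ, r.degree ≤ 4 ∧ ∀ z ∈ I, a z = r.eval z) :=
  polynomial_model_degree_classification_general n hn I hI hnt g g' hli b a R hPDE
end

section
/- Under the hypotheses of the degree-classification theorem with n ≥ 2, writing R(z) = R₀ + R₁z + R₂z², b(z) = b₀ + b₁z + b₂z² + b₃z³, a(z) = a₀ + a₁z + a₂z² + a₃z³ + a₄z⁴, the coefficients satisfy R₂ = (n/2)b₃ = -(n(n-1)/2)a₄ and R₁ = n b₂ + (n(n-1)/2) a₃. -/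
/-!
For fixed `x`, both sides of the PDE are polynomials in `z` agreeing on the infinite set `I`, so
they coincide as polynomials. The operator `L = b ∂ + ½ a ∂² - R` maps `z ^ k` to `z ^ (k - 2)`
times a polynomial of degree at most `4` whose two top coefficients are
`ℓ₂(k) = k b₃ + k (k - 1) / 2 a₄ - R₂` and `ℓ₁(k) = k b₂ + k (k - 1) / 2 a₃ - R₁`, while
`∂ₓ H` has degree at most `n`. The coefficients of `z ^ (n + 2)` and `z ^ (n + 1)` then give
`ℓ₂(n) g_n = 0` and `ℓ₁(n) g_n + ℓ₂(n - 1) g_{n-1} = 0` on `[0, ∞)`, so linear independence forces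
`ℓ₂(n) = ℓ₁(n) = ℓ₂(n - 1) = 0`, and the claimed relations are linear consequences of these.
-/

open Polynomial

noncomputable def diffusionGenerator (B A R : ℝ[X]) : ℝ[X] →ₗ[ℝ] ℝ[X] :=
  LinearMap.mulLeft ℝ B ∘ₗ derivative +
    LinearMap.mulLeft ℝ (C (1 / 2) * A) ∘ₗ derivative ∘ₗ derivative - LinearMap.mulLeft ℝ R

noncomputable def diffusionSymbol (B A R : ℝ[X]) (k : ℕ) : ℝ[X] :=
  C (k : ℝ) * (X * B) + C ((k : ℝ) * (k - 1) / 2) * A - X ^ 2 * R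

theorem eval_derivative_derivative_X_pow {S : Type*} [CommRing S] (k : ℕ) (z : S) :
    (derivative (derivative (X ^ k))).eval z = k * (k - 1) * z ^ (k - 2) := by
  rcases k with _ | _ | k <;> simp
  ring

theorem natDegree_sum_smul_X_pow_le {S : Type*} [Semiring S] {n : ℕ} (c : Fin (n + 1) → S) :
    (∑ k, c k • (X : S[X]) ^ (k : ℕ)).natDegree ≤ n :=
  natDegree_sum_le_of_forall_le _ _ fun k _ =>
    (natDegree_smul_le _ _).trans ((natDegree_X_pow_le _).trans k.is_le)

theorem LinearIndependent.eq_zero_of_domRestrict {K α ι : Type*} [Ring K] {s : Set α}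
    {f : ι → α → K} (hf : LinearIndependent K fun i => s.domRestrict (f i)) {i : ι} {a : K}
    (h : ∀ x ∈ s, a * f i x = 0) : a = 0 := by
  classical
  refine linearIndependent_iff'.mp hf {i} (fun _ => a) ?_ i (Finset.mem_singleton_self i)
  ext ⟨x, hx⟩
  simpa [Set.domRestrict_apply] using h x hx

theorem LinearIndependent.eq_zero_of_domRestrict_pair {K α ι : Type*} [Ring K] {s : Set α}
    {f : ι → α → K} (hf : LinearIndependent K fun i => s.domRestrict (f i)) {i j : ι}
    (hij : i ≠ j) {a b : K} (h : ∀ x ∈ s, a * f i x + b * f j x = 0) : a = 0 ∧ b = 0 := by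
  refine (LinearIndepOn.pair_iff _ hij).mp (hf.linearIndepOn _) a b ?_
  ext ⟨x, hx⟩
  simpa [Set.domRestrict_apply] using h x hx

section DiffusionGenerator

variable (B A R : ℝ[X])

theorem diffusionGenerator_apply (p : ℝ[X]) :
    diffusionGenerator B A R p =
      B * derivative p + C (1 / 2) * A * derivative (derivative p) - R * p := rfl

theorem eval_diffusionGenerator_sum {ι : Type*} (s : Finset ι) (c : ι → ℝ) (e : ι → ℕ)
    (z : ℝ) :
    (diffusionGenerator B A R (∑ i ∈ s, c i • X ^ e i)).eval z =
      B.eval z * (∑ i ∈ s, c i * e i * z ^ (e i - 1)) +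
        1 / 2 * A.eval z * (∑ i ∈ s, c i * e i * (e i - 1 : ℝ) * z ^ (e i - 2)) -
        R.eval z * ∑ i ∈ s, c i * z ^ e i := by
  simp only [diffusionGenerator_apply, map_sum, map_smul, eval_sub, eval_add, eval_mul, eval_C,
    eval_finsetSum, eval_smul, smul_eq_mul, eval_pow, eval_X, eval_derivative_derivative_X_pow,
    Finset.mul_sum, ← Finset.sum_add_distrib, ← Finset.sum_sub_distrib]
  simp only [derivative_X_pow, eval_mul, eval_C, eval_pow, eval_X]
  exact Finset.sum_congr rfl fun i _ => by ring

theorem X_sq_mul_diffusionGenerator_X_pow (k : ℕ) :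
    X ^ 2 * diffusionGenerator B A R (X ^ k) = X ^ k * diffusionSymbol B A R k := by
  refine Polynomial.funext fun z => ?_
  rcases k with _ | _ | k <;>
    simp [diffusionGenerator_apply, diffusionSymbol] <;> ring

theorem coeff_diffusionGenerator_X_pow_add (k j : ℕ) :
    (diffusionGenerator B A R (X ^ k)).coeff (k + j) =
      (diffusionSymbol B A R k).coeff (j + 2) := by
  rw [← coeff_X_pow_mul _ 2, X_sq_mul_diffusionGenerator_X_pow,
    show k + j + 2 = j + 2 + k by ring, coeff_X_pow_mul]

theorem coeff_diffusionSymbol_four (k : ℕ) :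
    (diffusionSymbol B A R k).coeff 4 =
      k * B.coeff 3 + k * (k - 1) / 2 * A.coeff 4 - R.coeff 2 := by
  simp [diffusionSymbol, coeff_X_mul, coeff_X_pow_mul']

theorem coeff_diffusionSymbol_three (k : ℕ) :
    (diffusionSymbol B A R k).coeff 3 =
      k * B.coeff 2 + k * (k - 1) / 2 * A.coeff 3 - R.coeff 1 := by
  simp [diffusionSymbol, coeff_X_mul, coeff_X_pow_mul']

variable {B A R}

theorem natDegree_diffusionSymbol_le (hB : B.natDegree ≤ 3) (hA : A.natDegree ≤ 4)
    (hR : R.natDegree ≤ 2) (k : ℕ) : (diffusionSymbol B A R k).natDegree ≤ 4 := by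
  unfold diffusionSymbol
  compute_degree
  omega

theorem coeff_diffusionGenerator_X_pow_eq_zero (hB : B.natDegree ≤ 3) (hA : A.natDegree ≤ 4)
    (hR : R.natDegree ≤ 2) {k m : ℕ} (h : k + 2 < m) :
    (diffusionGenerator B A R (X ^ k)).coeff m = 0 := by
  rw [show m = k + (m - k) by omega, coeff_diffusionGenerator_X_pow_add]
  exact coeff_eq_zero_of_natDegree_lt
    ((natDegree_diffusionSymbol_le hB hA hR k).trans_lt (by omega))

theorem coeff_diffusionGenerator_sum_top (hB : B.natDegree ≤ 3) (hA : A.natDegree ≤ 4)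
    (hR : R.natDegree ≤ 2) {n : ℕ} (c : Fin (n + 1) → ℝ) :
    (diffusionGenerator B A R (∑ k, c k • X ^ (k : ℕ))).coeff (n + 2) =
      c (Fin.last n) * (diffusionSymbol B A R n).coeff 4 := by
  simp only [map_sum, map_smul, finsetSum_coeff, coeff_smul, smul_eq_mul]
  rw [Fintype.sum_eq_single (Fin.last n), Fin.val_last, coeff_diffusionGenerator_X_pow_add]
  intro k hk
  rw [coeff_diffusionGenerator_X_pow_eq_zero hB hA hR (by have := Fin.val_lt_last hk; omega),
    mul_zero]

theorem coeff_diffusionGenerator_sum_subtop (hB : B.natDegree ≤ 3) (hA : A.natDegree ≤ 4)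
    (hR : R.natDegree ≤ 2) {n : ℕ} (c : Fin (n + 2) → ℝ) :
    (diffusionGenerator B A R (∑ k, c k • X ^ (k : ℕ))).coeff (n + 2) =
      c (Fin.last (n + 1)) * (diffusionSymbol B A R (n + 1)).coeff 3 +
        c (Fin.last n).castSucc * (diffusionSymbol B A R n).coeff 4 := by
  simp only [map_sum, map_smul, finsetSum_coeff, coeff_smul, smul_eq_mul]
  rw [Fintype.sum_eq_add (Fin.last (n + 1)) (Fin.last n).castSucc (Fin.castSucc_lt_last _).ne',
    Fin.val_last, Fin.val_castSucc, Fin.val_last, coeff_diffusionGenerator_X_pow_add,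
    coeff_diffusionGenerator_X_pow_add B A R (n + 1) 1]
  rintro k ⟨hk, hk'⟩
  have hkn : (k : ℕ) < n := by
    have := k.isLt
    simp only [ne_eq, Fin.ext_iff, Fin.val_last, Fin.val_castSucc] at hk hk'
    omega
  rw [coeff_diffusionGenerator_X_pow_eq_zero hB hA hR (by omega), mul_zero]

theorem coeff_diffusionSymbol_eq_zero_of_linearIndependent (hB : B.natDegree ≤ 3)
    (hA : A.natDegree ≤ 4) (hR : R.natDegree ≤ 2) {m : ℕ} {s : Set ℝ}
    {g g' : Fin (m + 2) → ℝ → ℝ} (hg : LinearIndependent ℝ fun k => s.domRestrict (g k))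
    (h : ∀ x ∈ s,
      ∑ k, g' k x • X ^ (k : ℕ) = diffusionGenerator B A R (∑ k, g k x • X ^ (k : ℕ))) :
    (diffusionSymbol B A R (m + 1)).coeff 4 = 0 ∧ (diffusionSymbol B A R (m + 1)).coeff 3 = 0 ∧
      (diffusionSymbol B A R m).coeff 4 = 0 := by
  have hcoeff : ∀ x ∈ s, ∀ j, m + 1 < j →
      (diffusionGenerator B A R (∑ k, g k x • X ^ (k : ℕ))).coeff j = 0 := fun x hx j hj => by
    rw [← h x hx, coeff_eq_zero_of_natDegree_lt ((natDegree_sum_smul_X_pow_le _).trans_lt hj)]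
  refine ⟨hg.eq_zero_of_domRestrict (i := Fin.last (m + 1)) fun x hx => ?_,
    hg.eq_zero_of_domRestrict_pair (Fin.castSucc_lt_last (Fin.last m)).ne' fun x hx => ?_⟩
  · rw [mul_comm, ← coeff_diffusionGenerator_sum_top hB hA hR (g · x)]
    exact hcoeff x hx _ (by omega)
  · rw [mul_comm, mul_comm _ (g _ x), ← coeff_diffusionGenerator_sum_subtop hB hA hR (g · x)]
    exact hcoeff x hx _ (by omega)

end DiffusionGenerator

theorem polynomial_model_coefficient_constraints_general
    (n : ℕ) (hn : 2 ≤ n)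
    (I : Set ℝ) (hI : I.OrdConnected) (hnt : ∃ x ∈ I, ∃ y ∈ I, x ≠ y)
    (g g' : Fin (n + 1) → ℝ → ℝ)
    (hli : LinearIndependent ℝ fun k => (Set.Ici (0 : ℝ)).restrict (g k))
    (b a R : ℝ → ℝ)
    (R₀ R₁ R₂ b₀ b₁ b₂ b₃ a₀ a₁ a₂ a₃ a₄ : ℝ)
    (hR : ∀ z ∈ I, R z = R₀ + R₁ * z + R₂ * z ^ 2)
    (hb : ∀ z ∈ I, b z = b₀ + b₁ * z + b₂ * z ^ 2 + b₃ * z ^ 3)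
    (ha : ∀ z ∈ I, a z = a₀ + a₁ * z + a₂ * z ^ 2 + a₃ * z ^ 3 + a₄ * z ^ 4)
    (hPDE : ∀ x : ℝ, 0 ≤ x → ∀ z ∈ I,
      ∑ k : Fin (n + 1), g' k x * z ^ (k : ℕ) =
        b z * (∑ k : Fin (n + 1), g k x * (k : ℕ) * z ^ ((k : ℕ) - 1)) +
          (1 / 2) * a z *
            (∑ k : Fin (n + 1), g k x * (k : ℕ) * ((k : ℕ) - 1 : ℝ) * z ^ ((k : ℕ) - 2)) -
          R z * ∑ k : Fin (n + 1), g k x * z ^ (k : ℕ)) :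
    R₂ = (n : ℝ) / 2 * b₃ ∧
    R₂ = -((n : ℝ) * ((n : ℝ) - 1) / 2) * a₄ ∧
    R₁ = (n : ℝ) * b₂ + (n : ℝ) * ((n : ℝ) - 1) / 2 * a₃ := by
  obtain ⟨m, rfl⟩ : ∃ m, n = m + 1 := ⟨n - 1, by omega⟩
  set B : ℝ[X] := C b₀ + C b₁ * X + C b₂ * X ^ 2 + C b₃ * X ^ 3
  set A : ℝ[X] := C a₀ + C a₁ * X + C a₂ * X ^ 2 + C a₃ * X ^ 3 + C a₄ * X ^ 4
  set Rp : ℝ[X] := C R₀ + C R₁ * X + C R₂ * X ^ 2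
  have hB : B.natDegree ≤ 3 := by simp only [B]; compute_degree
  have hA : A.natDegree ≤ 4 := by simp only [A]; compute_degree
  have hRp : Rp.natDegree ≤ 2 := by simp only [Rp]; compute_degree
  have hpoly : ∀ x ∈ Set.Ici 0,
      ∑ k, g' k x • X ^ (k : ℕ) = diffusionGenerator B A Rp (∑ k, g k x • X ^ (k : ℕ)) := by
    intro x hx
    refine eq_of_infinite_eval_eq _ _
      ((hI.isPreconnected.infinite_of_nontrivial hnt).mono fun z hz => ?_)
    rw [Set.mem_ofPred_eq, eval_diffusionGenerator_sum, eval_finsetSum]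
    simpa [B, A, Rp, ← hb z hz, ← ha z hz, ← hR z hz] using hPDE x hx z hz
  obtain ⟨htop, hsub₁, hsub₂⟩ :=
    coeff_diffusionSymbol_eq_zero_of_linearIndependent hB hA hRp hli hpoly
  simp only [coeff_diffusionSymbol_four, coeff_diffusionSymbol_three, B, A, Rp, Nat.cast_add,
    Nat.cast_one, coeff_add, coeff_C_succ, coeff_mul_X, add_zero, coeff_C_mul, coeff_X_pow,
    Nat.succ_ne_self, ↓reduceIte, mul_zero, mul_one, zero_add, add_sub_cancel_right,
    Nat.reduceEqDiff, coeff_C_zero, OfNat.one_ne_ofNat] at htop hsub₁ hsub₂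
  push_cast
  refine ⟨?_, ?_, ?_⟩
  · linear_combination ((m + 1 : ℝ) / 2 - 1) * htop - ((m + 1 : ℝ) / 2) * hsub₂
  · linear_combination (m : ℝ) * htop - (m + 1 : ℝ) * hsub₂
  · linear_combination -hsub₁

/-- Coefficient constraints in the degree classification theorem, `n ≥ 2`:
writing `R(z) = R₀+R₁z+R₂z²`, `b(z) = b₀+b₁z+b₂z²+b₃z³`,
`a(z) = a₀+a₁z+a₂z²+a₃z³+a₄z⁴`, one has
`R₂ = (n/2) b₃ = -(n(n-1)/2) a₄` and `R₁ = n b₂ + (n(n-1)/2) a₃`. -/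
theorem polynomial_model_coefficient_constraints
    (n : ℕ) (hn : 2 ≤ n)
    (I : Set ℝ) (hI : I.OrdConnected) (hnt : ∃ x ∈ I, ∃ y ∈ I, x ≠ y)
    (g g' : Fin (n + 1) → ℝ → ℝ)
    (hderiv : ∀ k, ∀ x : ℝ, 0 ≤ x →
      HasDerivWithinAt (g k) (g' k x) (Set.Ici 0) x)
    (hli : LinearIndependent ℝ fun k => (Set.Ici (0 : ℝ)).restrict (g k))
    (b a R : ℝ → ℝ)
    (R₀ R₁ R₂ b₀ b₁ b₂ b₃ a₀ a₁ a₂ a₃ a₄ : ℝ)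
    (hR : ∀ z ∈ I, R z = R₀ + R₁ * z + R₂ * z ^ 2)
    (hb : ∀ z ∈ I, b z = b₀ + b₁ * z + b₂ * z ^ 2 + b₃ * z ^ 3)
    (ha : ∀ z ∈ I, a z = a₀ + a₁ * z + a₂ * z ^ 2 + a₃ * z ^ 3 + a₄ * z ^ 4)
    (hPDE : ∀ x : ℝ, 0 ≤ x → ∀ z ∈ I,
      ∑ k : Fin (n + 1), g' k x * z ^ (k : ℕ) =
        b z * (∑ k : Fin (n + 1), g k x * (k : ℕ) * z ^ ((k : ℕ) - 1)) +
          (1 / 2) * a z *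
            (∑ k : Fin (n + 1), g k x * (k : ℕ) * ((k : ℕ) - 1 : ℝ) * z ^ ((k : ℕ) - 2)) -
          R z * ∑ k : Fin (n + 1), g k x * z ^ (k : ℕ)) :
    R₂ = (n : ℝ) / 2 * b₃ ∧
    R₂ = -((n : ℝ) * ((n : ℝ) - 1) / 2) * a₄ ∧
    R₁ = (n : ℝ) * b₂ + (n : ℝ) * ((n : ℝ) - 1) / 2 * a₃ :=
  polynomial_model_coefficient_constraints_general n hn I hI hnt g g' hli b a R R₀ R₁ R₂ b₀ b₁ b₂ b₃
    a₀ a₁ a₂ a₃ a₄ hR hb ha hPDE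
end

section
/- In the case n = 1: if H(x,z) = g₀(x) + g₁(x)z with g₀, g₁ differentiable and linearly independent, and ∂ₓH = b ∂_z H + (1/2)σ² ∂_{zz}H - RH on ℝ≥0 × I for a non-trivial interval I, then R(z) = R₀ + R₁z is affine, b(z) = b₀ + b₁z + b₂z² is quadratic with b₂ = R₁, and g₀' = -R₀g₀ + b₀g₁, g₁' = -R₁g₀ + (b₁ - R₀)g₁. -/
/-!
For fixed `z` the equation says `g₀' + z g₁' = -R(z) g₀ + (b(z) - z R(z)) g₁` as functions on `ℝ≥0`.
Comparing two distinct values of `z` puts `g₀'` and `g₁'` in the span of `g₀, g₁`, and then, by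
linear independence, the coefficients `-R(z)` and `b(z) - z R(z)` are affine in `z`.
-/

section AffineFamily

variable {K M : Type*} [Field K] [AddCommGroup M] [Module K M]

theorem Submodule.mem_and_mem_of_add_smul_mem {p : Submodule K M} {u v : M} {s t : K}
    (hst : s ≠ t) (hs : u + s • v ∈ p) (ht : u + t • v ∈ p) : u ∈ p ∧ v ∈ p := by
  have hv : v ∈ p := by
    refine (p.smul_mem_iff (sub_ne_zero.2 hst.symm)).1 ?_
    convert p.sub_mem ht hs using 1
    module
  refine ⟨?_, hv⟩
  convert p.sub_mem hs (p.smul_mem s hv) using 1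
  module

theorem LinearIndependent.exists_affine_coords_of_add_smul {w₀ w₁ u v : M}
    (hw : LinearIndependent K ![w₀, w₁]) {S : Set K} (hS : ∃ s ∈ S, ∃ t ∈ S, s ≠ t)
    {α β : K → K} (h : ∀ z ∈ S, u + z • v = α z • w₀ + β z • w₁) :
    ∃ a₀ a₁ c₀ c₁ : K, u = a₀ • w₀ + c₀ • w₁ ∧ v = a₁ • w₀ + c₁ • w₁ ∧
      ∀ z ∈ S, α z = a₀ + a₁ * z ∧ β z = c₀ + c₁ * z := by
  obtain ⟨s, hs, t, ht, hst⟩ := hS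
  have hmem : ∀ z ∈ S, u + z • v ∈ Submodule.span K {w₀, w₁} := fun z hz =>
    Submodule.mem_span_pair.2 ⟨α z, β z, (h z hz).symm⟩
  obtain ⟨hu, hv⟩ := Submodule.mem_and_mem_of_add_smul_mem hst (hmem s hs) (hmem t ht)
  obtain ⟨a₀, c₀, rfl⟩ := Submodule.mem_span_pair.1 hu
  obtain ⟨a₁, c₁, rfl⟩ := Submodule.mem_span_pair.1 hv
  refine ⟨a₀, a₁, c₀, c₁, rfl, rfl, fun z hz => ?_⟩
  have hz' : (a₀ + a₁ * z) • w₀ + (c₀ + c₁ * z) • w₁ = α z • w₀ + β z • w₁ := by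
    rw [← h z hz]
    module
  exact (hw.eq_of_pair hz').imp Eq.symm Eq.symm

end AffineFamily

theorem polynomial_model_affine_case_general
    (I : Set ℝ) (hnt : ∃ x ∈ I, ∃ y ∈ I, x ≠ y)
    (g₀ g₁ g₀' g₁' : ℝ → ℝ)
    (hli : LinearIndependent ℝ
      ![(Set.Ici (0 : ℝ)).restrict g₀, (Set.Ici (0 : ℝ)).restrict g₁])
    (b R : ℝ → ℝ)
    (hPDE : ∀ x : ℝ, 0 ≤ x → ∀ z ∈ I,
      g₀' x + g₁' x * z = b z * g₁ x - R z * (g₀ x + g₁ x * z)) :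
    ∃ R₀ R₁ b₀ b₁ b₂ : ℝ,
      (∀ z ∈ I, R z = R₀ + R₁ * z) ∧
      (∀ z ∈ I, b z = b₀ + b₁ * z + b₂ * z ^ 2) ∧
      b₂ = R₁ ∧
      (∀ x : ℝ, 0 ≤ x →
        g₀' x = -R₀ * g₀ x + b₀ * g₁ x ∧
        g₁' x = -R₁ * g₀ x + (b₁ - R₀) * g₁ x) := by
  obtain ⟨a₀, a₁, c₀, c₁, hg₀', hg₁', hcoef⟩ :=
    hli.exists_affine_coords_of_add_smul hnt (α := fun z => -R z) (β := fun z => b z - R z * z)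
      (u := (Set.Ici 0).domRestrict g₀') (v := (Set.Ici 0).domRestrict g₁') fun z hz => by
        funext x
        show g₀' x + z * g₁' x = -R z * g₀ x + (b z - R z * z) * g₁ x
        linear_combination hPDE x x.2 z hz
  have hR : ∀ z ∈ I, R z = -a₀ + -a₁ * z := fun z hz => by linarith [(hcoef z hz).1]
  refine ⟨-a₀, -a₁, c₀, c₁ - a₀, -a₁, hR, fun z hz => ?_, rfl, fun x hx => ?_⟩
  · linear_combination (hcoef z hz).2 + z * hR z hz
  · have h₀ : g₀' x = a₀ * g₀ x + c₀ * g₁ x := congrFun hg₀' ⟨x, hx⟩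
    have h₁ : g₁' x = a₁ * g₀ x + c₁ * g₁ x := congrFun hg₁' ⟨x, hx⟩
    constructor
    · linear_combination h₀
    · linear_combination h₁

/-- Classification in the case `n = 1`: if `H(x,z) = g₀(x) + g₁(x) z` with
`g₀, g₁` differentiable and linearly independent satisfies
`∂ₓH = b ∂_zH + (1/2)σ² ∂_{zz}H - RH` on `ℝ₊ × I` (`∂_{zz}H ≡ 0`), then
`R` is affine, `b` is quadratic with `b₂ = R₁`, and `g₀, g₁` solve the
stated linear ODE system. -/
theorem polynomial_model_affine_case
    (I : Set ℝ) (hI : I.OrdConnected) (hnt : ∃ x ∈ I, ∃ y ∈ I, x ≠ y)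
    (g₀ g₁ g₀' g₁' : ℝ → ℝ)
    (hderiv₀ : ∀ x : ℝ, 0 ≤ x → HasDerivWithinAt g₀ (g₀' x) (Set.Ici 0) x)
    (hderiv₁ : ∀ x : ℝ, 0 ≤ x → HasDerivWithinAt g₁ (g₁' x) (Set.Ici 0) x)
    (hli : LinearIndependent ℝ
      ![(Set.Ici (0 : ℝ)).restrict g₀, (Set.Ici (0 : ℝ)).restrict g₁])
    (b R : ℝ → ℝ)
    (hPDE : ∀ x : ℝ, 0 ≤ x → ∀ z ∈ I,
      g₀' x + g₁' x * z = b z * g₁ x - R z * (g₀ x + g₁ x * z)) :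
    ∃ R₀ R₁ b₀ b₁ b₂ : ℝ,
      (∀ z ∈ I, R z = R₀ + R₁ * z) ∧
      (∀ z ∈ I, b z = b₀ + b₁ * z + b₂ * z ^ 2) ∧
      b₂ = R₁ ∧
      (∀ x : ℝ, 0 ≤ x →
        g₀' x = -R₀ * g₀ x + b₀ * g₁ x ∧
        g₁' x = -R₁ * g₀ x + (b₁ - R₀) * g₁ x) :=
  polynomial_model_affine_case_general I hnt g₀ g₁ g₀' g₁' hli b R hPDE
end

section
/- Suppose functions A_k : I → ℝ, k = 0,…,n, and differentiable linearly independent functions g_k : ℝ≥0 → ℝ satisfy Σ_{k=0}^n g_k'(x) z^k = Σ_{k=0}^n g_k(x) A_k(z) for all x ≥ 0 and z ∈ I. Then each A_k is a polynomial of degree at most n. -/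
/-!
Linear independence of the `g_k` provides points `x_0, …, x_n ≥ 0` at which the evaluation
matrix `(g_k(x_j))` is invertible. Solving the identity at these points expresses each `A_k(z)`
as a fixed linear combination of the polynomials `∑ i, g_i'(x_j) z^i`.
-/

open Submodule in
theorem LinearIndependent.span_range_eval_eq_top {ι α K : Type*} [Fintype ι] [Field K]
    {f : ι → α → K} (hf : LinearIndependent K f) :
    span K (Set.range fun a k => f k a) = ⊤ := by
  classical
  rw [← dualAnnihilator_eq_bot_iff, eq_bot_iff]
  intro φ hφ
  let c : ι → K := fun k => φ fun j => if k = j then 1 else 0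
  have hvanish : ∑ k, c k • f k = 0 := funext fun a => by
    have := (mem_dualAnnihilator φ).mp hφ _ (subset_span ⟨a, rfl⟩)
    rw [LinearMap.pi_apply_eq_sum_univ φ] at this
    simpa only [Finset.sum_apply, Pi.smul_apply, smul_eq_mul, mul_comm, Pi.zero_apply] using this
  have hc := Fintype.linearIndependent_iff.mp hf c hvanish
  refine (mem_bot K).mpr <| LinearMap.ext fun v => ?_
  simpa [LinearMap.pi_apply_eq_sum_univ φ v] using Finset.sum_eq_zero fun k _ => by
    rw [show φ _ = c k from rfl, hc k, mul_zero]

theorem LinearIndependent.exists_isUnit_eval_matrix {ι α K : Type*} [Fintype ι] [DecidableEq ι]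
    [Field K] {f : ι → α → K} (hf : LinearIndependent K f) :
    ∃ x : ι → α, IsUnit (Matrix.of fun j k => f k (x j)) := by
  let b := Module.Basis.ofSpan hf.span_range_eval_eq_top.ge
  let e := (Pi.basisFun K ι).indexEquiv b
  have hx : ∀ j, b (e j) ∈ Set.range fun a k => f k a := fun j =>
    Module.Basis.ofSpan_subset _ (Set.mem_range_self (e j))
  choose x hx using hx
  refine ⟨x, Matrix.linearIndependent_rows_iff_isUnit.mp ?_⟩
  rw [show (Matrix.of fun j k => f k (x j)).row = b ∘ e from funext hx]
  exact b.linearIndependent.comp e e.injective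

open Matrix in
theorem LinearIndependent.exists_coeff_eq_sum_eval {ι α K : Type*} [Fintype ι] [Field K]
    {f : ι → α → K} (hf : LinearIndependent K f) :
    ∃ (x : ι → α) (c : Matrix ι ι K), ∀ (v : ι → K) (k : ι),
      v k = ∑ j, c k j * ∑ i, f i (x j) * v i := by
  classical
  obtain ⟨x, hM⟩ := hf.exists_isUnit_eval_matrix
  set M : Matrix ι ι K := Matrix.of fun j k => f k (x j)
  refine ⟨x, M⁻¹, fun v k => ?_⟩
  have hinv : M⁻¹ * M = 1 := nonsing_inv_mul M (M.isUnit_iff_isUnit_det.mp hM)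
  calc v k = ((M⁻¹ * M) *ᵥ v) k := by rw [hinv, one_mulVec]
    _ = _ := by
      rw [← mulVec_mulVec]
      simp only [mulVec, dotProduct, M, of_apply]

theorem coefficient_functions_are_polynomials_general
    (n : ℕ)
    (I : Set ℝ)
    (g g' : Fin (n + 1) → ℝ → ℝ)
    (hli : LinearIndependent ℝ fun k => (Set.Ici (0 : ℝ)).restrict (g k))
    (A : Fin (n + 1) → ℝ → ℝ)
    (hEq : ∀ x : ℝ, 0 ≤ x → ∀ z ∈ I,
      ∑ k : Fin (n + 1), g' k x * z ^ (k : ℕ) =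
        ∑ k : Fin (n + 1), g k x * A k z) :
    ∀ k, ∃ p : Polynomial ℝ, p.degree ≤ n ∧ ∀ z ∈ I, A k z = p.eval z := by
  obtain ⟨x, c, hc⟩ := hli.exists_coeff_eq_sum_eval
  intro k
  refine ⟨∑ i : Fin (n + 1), .C (∑ j, c k j * g' i (x j)) * .X ^ (i : ℕ), ?_, fun z hz => ?_⟩
  · exact Order.le_of_lt_succ (Polynomial.degree_sum_fin_lt _)
  · calc A k z = ∑ j, c k j * ∑ i, g i (x j) * A i z := hc (fun i => A i z) k
      _ = ∑ j, c k j * ∑ i : Fin (n + 1), g' i (x j) * z ^ (i : ℕ) :=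
          Finset.sum_congr rfl fun j _ => by rw [hEq (x j) (x j).2 z hz]
      _ = _ := by
          simp only [Polynomial.eval_finsetSum, Polynomial.eval_mul, Polynomial.eval_C,
            Polynomial.eval_pow, Polynomial.eval_X, Finset.mul_sum, Finset.sum_mul, mul_assoc]
          rw [Finset.sum_comm]

/-- If differentiable, linearly independent functions `g_k` satisfy
`Σ g_k'(x) z^k = Σ g_k(x) A_k(z)` for all `x ≥ 0, z ∈ I`, then each
`A_k` agrees on `I` with a polynomial of degree at most `n`. -/
theorem coefficient_functions_are_polynomials
    (n : ℕ)
    (I : Set ℝ) (hI : I.OrdConnected) (hnt : ∃ x ∈ I, ∃ y ∈ I, x ≠ y)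
    (g g' : Fin (n + 1) → ℝ → ℝ)
    (hderiv : ∀ k, ∀ x : ℝ, 0 ≤ x →
      HasDerivWithinAt (g k) (g' k x) (Set.Ici 0) x)
    (hli : LinearIndependent ℝ fun k => (Set.Ici (0 : ℝ)).restrict (g k))
    (A : Fin (n + 1) → ℝ → ℝ)
    (hEq : ∀ x : ℝ, 0 ≤ x → ∀ z ∈ I,
      ∑ k : Fin (n + 1), g' k x * z ^ (k : ℕ) =
        ∑ k : Fin (n + 1), g k x * A k z) :
    ∀ k, ∃ p : Polynomial ℝ, p.degree ≤ n ∧ ∀ z ∈ I, A k z = p.eval z :=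
  coefficient_functions_are_polynomials_general n I g g' hli A hEq
end
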